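/- arXiv:1508.02968 — 6 statements merged into one kernel-verified Lean document; each statement's English description precedes it below -/
import Mathlib

section
/- If W is a right-maximal substring of T and V is a nonempty proper border of W, then V is right-maximal in T. Similarly, if W is left-maximal then V is left-maximal, and if W is a maximal repeat of T then V is a maximal repeat of T. -/
open List

variable {α : Type*} [DecidableEq α]

/-- Set of starting positions of occurrences of `W` in `T`. -/
def occSet (T W : List α) : Finset ℕ :=
  (Finset.range (T.length + 1)).filter (fun i => (T.drop i).take W.length = W)

/-- Number of occurrences of `W` in `T`. -/
def fT (T W : List α) : ℕ := (occSet T W).card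

/-- Number of occurrences of `W` in the circular version of `T`. -/
def fC (T W : List α) : ℕ :=
  ((Finset.range T.length).filter (fun i => ((T ++ T).drop i).take W.length = W)).card

/-- Lengths of proper borders of `W`. -/
def borders (W : List α) : Finset ℕ :=
  (Finset.Ioo 0 W.length).filter (fun b => W.take b <:+ W)

/-- Length of the longest proper border of `W` (0 if none). -/
def bord (W : List α) : ℕ := (borders W).sup id

/-- `a|W`: length of the longest proper border of `W` preceded by `a`
when it occurs as a suffix of `W` (0 if none). -/
def bordPre (a : α) (W : List α) : ℕ :=
  ((borders W).filter (fun b => W[W.length - b - 1]? = some a)).sup id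

/-- `W|b`: length of the longest proper border of `W` followed by `b`
when it occurs as a prefix of `W` (0 if none). -/
def bordFol (b : α) (W : List α) : ℕ :=
  ((borders W).filter (fun p => W[p]? = some b)).sup id

/-- `V` is a nonempty proper border of `W`. -/
def IsProperBorder (V W : List α) : Prop :=
  V ≠ [] ∧ V.length < W.length ∧ V <+: W ∧ V <:+ W

/-- `W` is right-maximal in `T`. -/
def IsRightMax (T W : List α) : Prop :=
  ∃ b c : α, b ≠ c ∧ (W ++ [b]) <:+: T ∧ (W ++ [c]) <:+: T

/-- `W` is left-maximal in `T`. -/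
def IsLeftMax (T W : List α) : Prop :=
  ∃ b c : α, b ≠ c ∧ (b :: W) <:+: T ∧ (c :: W) <:+: T

/-- `W` is a maximal repeat of `T`. -/
def IsMaxRepeat (T W : List α) : Prop :=
  1 < fT T W ∧ IsLeftMax T W ∧ IsRightMax T W

omit [DecidableEq α] in
theorem IsRightMax.of_suffix {T V W : List α} (hVW : V <:+ W) (hW : IsRightMax T W) :
    IsRightMax T V := by
  obtain ⟨b, c, hbc, hb, hc⟩ := hW
  exact ⟨b, c, hbc, (suffix_append_self_iff.mpr hVW).isInfix.trans hb,
    (suffix_append_self_iff.mpr hVW).isInfix.trans hc⟩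

omit [DecidableEq α] in
theorem IsLeftMax.of_prefix {T V W : List α} (hVW : V <+: W) (hW : IsLeftMax T W) :
    IsLeftMax T V := by
  obtain ⟨b, c, hbc, hb, hc⟩ := hW
  exact ⟨b, c, hbc, (cons_prefix_cons.mpr ⟨rfl, hVW⟩).isInfix.trans hb,
    (cons_prefix_cons.mpr ⟨rfl, hVW⟩).isInfix.trans hc⟩

theorem occSet_subset_of_prefix {T V W : List α} (hVW : V <+: W) :
    occSet T W ⊆ occSet T V := by
  intro i hi
  simp only [occSet, Finset.mem_filter] at hi ⊢
  refine ⟨hi.1, ?_⟩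
  calc (T.drop i).take V.length
      = ((T.drop i).take W.length).take V.length := by
        rw [take_take, min_eq_left hVW.length_le]
    _ = V := by rw [hi.2, ← prefix_iff_eq_take.mp hVW]

theorem fT_le_of_prefix {T V W : List α} (hVW : V <+: W) : fT T W ≤ fT T V :=
  Finset.card_le_card (occSet_subset_of_prefix hVW)

theorem IsMaxRepeat.of_prefix_of_suffix {T V W : List α} (hpre : V <+: W) (hsuf : V <:+ W)
    (hW : IsMaxRepeat T W) : IsMaxRepeat T V :=
  ⟨hW.1.trans_le (fT_le_of_prefix hpre), hW.2.1.of_prefix hpre, hW.2.2.of_suffix hsuf⟩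

/-- borders inherit right-maximality, left-maximality and
maximal-repeatness. -/
theorem border_inherits_maximality (T W V : List α) (hV : IsProperBorder V W) :
    (IsRightMax T W → IsRightMax T V) ∧
    (IsLeftMax T W → IsLeftMax T V) ∧
    (IsMaxRepeat T W → IsMaxRepeat T V) := by
  obtain ⟨-, -, hpre, hsuf⟩ := hV
  exact ⟨IsRightMax.of_suffix hsuf, IsLeftMax.of_prefix hpre,
    IsMaxRepeat.of_prefix_of_suffix hpre hsuf⟩
end

section
/- Let T be a trie with vertex set V over alphabet [1..σ], where ℓ(v) denotes the reversed label of the path from the root to v. For v ∈ V and character a, define a|v to be the node w ∈ V (if it exists) whose label ℓ(w) equals the longest border of ℓ(v) that is preceded by character a when occurring as a suffix of ℓ(v). Then the set of return arcs E' = {(v, a|v) : v ∈ V, a ∈ [1..σ], a|v exists and is not the root} has cardinality at most 2|V|. -/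
open List

variable {α : Type*} [DecidableEq α]

/-! A node `A` has at most one return arc per character that precedes a proper border of `A`;
call `m_A(c)` the number of borders of `A` preceded by `c`.
A border of length `p + 1` of the child `c :: A` is `c` followed by a border of length `p` of
`A` preceded by `c` (or `p = 0`), so `|borders (c :: A)| ≤ m_A(c) + 1`. At a node, every
preceding character that does not label a child edge accounts for at least one border of `A`
that no child inherits. Summing over the trie, the border counts telescope and the number of
return arcs is bounded by twice the number of edges. -/

def bordersPrecededBy (A : List α) (c : α) : Finset ℕ :=
  (borders A).filter (fun b => A[A.length - b - 1]? = some c)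

theorem bordPre_eq_sup (a : α) (A : List α) : bordPre a A = (bordersPrecededBy A a).sup id := rfl

theorem pos_of_mem_borders {A : List α} {b : ℕ} (h : b ∈ borders A) : 0 < b :=
  (Finset.mem_Ioo.1 (Finset.mem_filter.1 h).1).1

theorem bordersPrecededBy_nonempty_of_bordPre_pos {a : α} {A : List α} (h : 0 < bordPre a A) :
    (bordersPrecededBy A a).Nonempty := by
  rw [Finset.nonempty_iff_ne_empty]
  rintro hempty
  rw [bordPre_eq_sup, hempty] at h
  simp at h

theorem sum_card_bordersPrecededBy_le (A : List α) (s : Finset α) :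
    ∑ c ∈ s, (bordersPrecededBy A c).card ≤ (borders A).card := by
  calc ∑ c ∈ s, (bordersPrecededBy A c).card
      = ∑ o ∈ s.map .some, ((borders A).filter (fun b => A[A.length - b - 1]? = o)).card := by
        rw [Finset.sum_map]; rfl
    _ ≤ (borders A).card := by
        rw [Finset.sum_card_fiberwise_eq_card_filter]
        exact Finset.card_filter_le _ _

theorem card_bordPre_pos_add_sum_le [Fintype α] (A : List α) (s : Finset α) :
    (Finset.univ.filter (fun a => 0 < bordPre a A)).card + ∑ c ∈ s, (bordersPrecededBy A c).card ≤
      (borders A).card + s.card := by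
  set D := Finset.univ.filter (fun a => 0 < bordPre a A)
  have hsdiff : (D \ s).card ≤ ∑ c ∈ D \ s, (bordersPrecededBy A c).card := by
    simpa using Finset.card_nsmul_le_sum (D \ s) _ 1 fun c hc =>
      Finset.one_le_card.2 <| bordersPrecededBy_nonempty_of_bordPre_pos
        (Finset.mem_filter.1 (Finset.mem_sdiff.1 hc).1).2
  calc D.card + ∑ c ∈ s, (bordersPrecededBy A c).card
      ≤ ∑ c ∈ D \ s, (bordersPrecededBy A c).card + ∑ c ∈ s, (bordersPrecededBy A c).card
          + s.card := by
        have := Finset.card_le_card_sdiff_add_card (s := D) (t := s)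
        omega
    _ = ∑ c ∈ D \ s ∪ s, (bordersPrecededBy A c).card + s.card := by
        rw [Finset.sum_union Finset.sdiff_disjoint]
    _ ≤ (borders A).card + s.card := by
        gcongr
        exact sum_card_bordersPrecededBy_le A _

theorem cons_take_suffix_of_succ_mem_borders_cons {c : α} {A : List α} {p : ℕ}
    (h : p + 1 ∈ borders (c :: A)) : c :: A.take p <:+ A := by
  obtain ⟨hp, hsuffix⟩ := Finset.mem_filter.1 h
  have hpA : p < A.length := Nat.succ_lt_succ_iff.1 (Finset.mem_Ioo.1 hp).2
  rw [List.take_succ_cons, List.suffix_cons_iff] at hsuffix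
  refine hsuffix.resolve_left fun heq => ?_
  have := congrArg List.length heq
  simp only [List.length_cons, List.length_take] at this
  omega

theorem mem_bordersPrecededBy_of_succ_mem_borders_cons {c : α} {A : List α} {p : ℕ}
    (h : p + 1 ∈ borders (c :: A)) (hp : p ≠ 0) : p ∈ bordersPrecededBy A c := by
  have hsuffix := cons_take_suffix_of_succ_mem_borders_cons h
  have hpA : p < A.length := by simpa using hsuffix.length_le
  refine Finset.mem_filter.2 ⟨Finset.mem_filter.2 ⟨Finset.mem_Ioo.2 ⟨by omega, hpA⟩,
    (List.suffix_cons _ _).trans hsuffix⟩, ?_⟩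
  have hc := hsuffix.getElem (i := 0) (by simp)
  simp only [List.getElem_cons_zero, List.length_cons, List.length_take,
    Nat.min_eq_left hpA.le, Nat.add_zero] at hc
  rw [hc, Nat.sub_sub]
  exact List.getElem?_eq_getElem _

theorem card_borders_cons_le (c : α) (A : List α) :
    (borders (c :: A)).card ≤ (bordersPrecededBy A c).card + 1 := by
  calc (borders (c :: A)).card ≤ (insert 0 (bordersPrecededBy A c)).card := by
        refine Finset.card_le_card_of_injOn (· - 1) (fun q hq => ?_) fun p hp q hq h => ?_
        · obtain ⟨p, rfl⟩ : ∃ p, q = p + 1 := ⟨q - 1, by have := pos_of_mem_borders hq; omega⟩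
          by_cases hp : p = 0
          · simp [hp]
          · simpa using Or.inr (mem_bordersPrecededBy_of_succ_mem_borders_cons hq hp)
        · have := pos_of_mem_borders hp
          have := pos_of_mem_borders hq
          simp only at h
          omega
    _ ≤ (bordersPrecededBy A c).card + 1 := Finset.card_insert_le _ _

section Trie

variable [Fintype α] {V : Finset (List α)}

def children (V : Finset (List α)) (A : List α) : Finset α :=
  Finset.univ.filter (fun c => c :: A ∈ V)

theorem sum_sum_children {M : Type*} [AddCommMonoid M] (hV : ∀ c A, c :: A ∈ V → A ∈ V)
    (g : List α → M) :
    ∑ A ∈ V, ∑ c ∈ children V A, g (c :: A) = ∑ B ∈ V with B ≠ [], g B := by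
  rw [Finset.sum_sigma']
  refine Finset.sum_bij (fun x _ => x.2 :: x.1) (fun x hx => ?_) ?_ (fun B hB => ?_)
    (fun _ _ => rfl)
  · simpa [children] using (Finset.mem_sigma.1 hx).2
  · rintro ⟨A, a⟩ - ⟨B, b⟩ - h
    obtain ⟨rfl, rfl⟩ := List.cons_eq_cons.1 h
    rfl
  · obtain ⟨hBV, hB⟩ := Finset.mem_filter.1 hB
    obtain ⟨c, A, rfl⟩ := List.exists_cons_of_ne_nil hB
    exact ⟨⟨A, c⟩, Finset.mem_sigma.2 ⟨hV c A hBV, by simpa [children] using hBV⟩, rfl⟩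

theorem sum_card_children_le (hV : ∀ c A, c :: A ∈ V → A ∈ V) :
    ∑ A ∈ V, (children V A).card ≤ V.card := by
  have := sum_sum_children hV (fun _ => 1)
  simp only [Finset.sum_const, smul_eq_mul, mul_one] at this
  exact this.trans_le (Finset.card_filter_le V _)

theorem sum_card_borders_le (hV : ∀ c A, c :: A ∈ V → A ∈ V) :
    ∑ A ∈ V, (borders A).card ≤
      ∑ A ∈ V, ∑ c ∈ children V A, ((bordersPrecededBy A c).card + 1) := by
  calc ∑ A ∈ V, (borders A).card = ∑ B ∈ V with B ≠ [], (borders B).card :=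
        (Finset.sum_filter_of_ne fun B _ hB => by rintro rfl; simp [borders] at hB).symm
    _ = ∑ A ∈ V, ∑ c ∈ children V A, (borders (c :: A)).card := (sum_sum_children hV _).symm
    _ ≤ _ := Finset.sum_le_sum fun A _ => Finset.sum_le_sum fun c _ => card_borders_cons_le c A

theorem sum_card_bordPre_pos_le (hV : ∀ c A, c :: A ∈ V → A ∈ V) :
    ∑ A ∈ V, (Finset.univ.filter (fun a => 0 < bordPre a A)).card ≤ 2 * V.card := by
  have hnode := Finset.sum_le_sum fun A (_ : A ∈ V) => card_bordPre_pos_add_sum_le A (children V A)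
  have hborders := sum_card_borders_le hV
  have hchildren := sum_card_children_le hV
  simp only [Finset.sum_add_distrib, Finset.sum_const, smul_eq_mul, mul_one] at hnode hborders
  omega

end Trie

/-- A trie is a finite suffix-closed set of reversed path labels, each node identified with its
label; the parent of the node `c :: s` is `s`. -/
theorem return_arcs_bound {σ : ℕ} (V : Finset (List (Fin σ)))
    (hsuf : ∀ s ∈ V, ∀ t : List (Fin σ), t <:+ s → t ∈ V) :
    (V.biUnion (fun A =>
      ((Finset.univ : Finset (Fin σ)).filter (fun a => 0 < bordPre a A)).image
        (fun a => (A, A.take (bordPre a A))))).card ≤ 2 * V.card :=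
  Finset.card_biUnion_le.trans <| (Finset.sum_le_sum fun _ _ => Finset.card_image_le).trans <|
    sum_card_bordPre_pos_le fun c A h => hsuf _ h A (List.suffix_cons c A)
end

section
/- In the setting of return arcs on a trie, no two distinct type-2 return arcs are charged to the same vertex: if (u1, v1) and (u2, v2) are distinct return arcs such that neither u1 nor u2 has an outgoing trie edge labeled by the respective arc's character, and arc (u_i, v_i) with label a_i is charged to the vertex w_i satisfying ℓ(u_i) = B_i · ℓ(w_i) where B_i is the longest border of ℓ(u_i) preceded by a_i, then w_1 ≠ w_2. -/
open List

variable {α : Type*} [DecidableEq α]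

/-!
Write `w` for the common charged vertex and `Bᵢ` for the borders, so `uᵢ = Bᵢ ++ w`, `Bᵢ` is a
suffix of `Bᵢ ++ w` and `a₁ :: B₁` is a suffix of `u₁`. A word `x` that is a suffix of `x ++ w` with
`w ≠ []` is determined by `w` and its length (it is periodic with period `|w|`). If `|B₁| = |B₂|`
this gives `B₁ = B₂`, so the two arcs coincide. If `|B₁| < |B₂|`, the suffix of `B₂` of length
`|B₁| + 1` is such a word, as is `a₁ :: B₁`; hence `a₁ :: u₁` is a suffix of `u₂`, and suffix
closure makes it a node: the arc from `u₁` is not of type 2.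
-/

namespace List

variable {β : Type*}

theorem exists_eq_append_of_suffix_append_of_length_lt {x t : List β} (hx : x <:+ x ++ t)
    (hlt : t.length < x.length) : ∃ y, y <:+ y ++ t ∧ x = y ++ t := by
  obtain ⟨s, hs⟩ := hx
  have hst : s.length = t.length := by
    have := congrArg length hs
    simp only [length_append] at this
    omega
  rcases append_eq_append_iff.mp hs.symm with ⟨r, hr, -⟩ | ⟨y, hy, hyt⟩
  · have := congrArg length hr
    simp only [length_append] at this
    omega
  · exact ⟨y, ⟨s, hy.symm.trans hyt⟩, hyt⟩

theorem eq_of_suffix_append_of_length_eq {x₁ x₂ t : List β} (ht : t ≠ [])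
    (h₁ : x₁ <:+ x₁ ++ t) (h₂ : x₂ <:+ x₂ ++ t) (hlen : x₁.length = x₂.length) : x₁ = x₂ := by
  induction hn : x₁.length using Nat.strong_induction_on generalizing x₁ x₂ with
  | _ n ih =>
    by_cases hshort : n ≤ t.length
    · have hx₁ : x₁ <:+ t := suffix_of_suffix_length_le h₁ (suffix_append x₁ t) (by omega)
      have hx₂ : x₂ <:+ t := suffix_of_suffix_length_le h₂ (suffix_append x₂ t) (by omega)
      exact (suffix_of_suffix_length_le hx₁ hx₂ hlen.le).eq_of_length hlen
    · obtain ⟨y₁, hy₁, rfl⟩ := exists_eq_append_of_suffix_append_of_length_lt h₁ (by omega)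
      obtain ⟨y₂, hy₂, rfl⟩ := exists_eq_append_of_suffix_append_of_length_lt h₂ (by omega)
      simp only [length_append] at hn hlen
      have hpos : 0 < t.length := length_pos_iff.mpr ht
      rw [ih y₁.length (by omega) hy₁ hy₂ (by omega) rfl]

theorem cons_append_suffix_of_length_lt {a : β} {B₁ B₂ w : List β} (hw : w ≠ [])
    (h₁ : a :: B₁ <:+ B₁ ++ w) (h₂ : B₂ <:+ B₂ ++ w) (hlt : B₁.length < B₂.length) :
    a :: (B₁ ++ w) <:+ B₂ ++ w := by
  set x := B₂.drop (B₂.length - (B₁.length + 1))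
  have hxw : x ++ w <:+ B₂ ++ w := by
    rw [← drop_append_of_le_length (Nat.sub_le _ _)]
    exact drop_suffix _ _
  have hx : x <:+ x ++ w :=
    suffix_of_suffix_length_le ((drop_suffix _ _).trans h₂) hxw (by simp)
  have ha : a :: B₁ <:+ (a :: B₁) ++ w := h₁.trans (suffix_cons a _)
  have hxa : x = a :: B₁ := eq_of_suffix_append_of_length_eq hw hx ha (by simp [x]; omega)
  simpa [hxa] using hxw

theorem eq_or_cons_append_suffix_of_length_le {a : β} {B₁ B₂ w : List β} (hw : w ≠ [])
    (h₁ : a :: B₁ <:+ B₁ ++ w) (h₂ : B₂ <:+ B₂ ++ w) (hle : B₁.length ≤ B₂.length) :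
    B₁ = B₂ ∨ a :: (B₁ ++ w) <:+ B₂ ++ w := by
  rcases hle.lt_or_eq with hlt | heq
  · exact Or.inr (cons_append_suffix_of_length_lt hw h₁ h₂ hlt)
  · exact Or.inl (eq_of_suffix_append_of_length_eq hw ((suffix_cons a _).trans h₁) h₂ heq)

end List

theorem Finset.sup_id_mem_of_pos {s : Finset ℕ} (h : 0 < s.sup id) : s.sup id ∈ s := by
  obtain ⟨i, hi, hk⟩ :=
    s.exists_mem_eq_sup (s.nonempty_iff_ne_empty.mpr (by rintro rfl; simp at h)) id
  rw [hk]
  exact hi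

theorem bordPre_lt_length_and_cons_take_suffix {a : α} {u : List α} (h : 0 < bordPre a u) :
    bordPre a u < u.length ∧ a :: u.take (bordPre a u) <:+ u := by
  set k := bordPre a u
  have hmem : k ∈ (borders u).filter (fun b => u[u.length - b - 1]? = some a) :=
    Finset.sup_id_mem_of_pos h
  simp only [borders, Finset.mem_filter, Finset.mem_Ioo] at hmem
  obtain ⟨⟨⟨-, hlt⟩, hborder⟩, hget⟩ := hmem
  refine ⟨hlt, ?_⟩
  obtain ⟨hi, hval⟩ := List.getElem?_eq_some_iff.mp hget
  have hdrop : u.drop (u.length - k - 1) = a :: u.drop (u.length - k) := by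
    rw [drop_eq_getElem_cons hi, hval]
    congr 2
    omega
  have htake : u.take k = u.drop (u.length - k) := by
    simpa [min_eq_left hlt.le] using suffix_iff_eq_drop.mp hborder
  rw [htake, ← hdrop]
  exact drop_suffix _ _

/-- The trie is modelled as the suffix-closed finite set `V` of reversed node labels: the arc from
`uᵢ` with character `aᵢ` is of type 2 when `aᵢ :: uᵢ ∉ V`, and is charged to
`uᵢ.drop (bordPre aᵢ uᵢ)`. -/
theorem type2_arcs_distinct_charge {σ : ℕ} (V : Finset (List (Fin σ)))
    (hsuf : ∀ s ∈ V, ∀ t : List (Fin σ), t <:+ s → t ∈ V)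
    (u₁ u₂ : List (Fin σ)) (a₁ a₂ : Fin σ)
    (hu₁ : u₁ ∈ V) (hu₂ : u₂ ∈ V)
    (hb₁ : 0 < bordPre a₁ u₁) (hb₂ : 0 < bordPre a₂ u₂)
    (htype₁ : (a₁ :: u₁) ∉ V) (htype₂ : (a₂ :: u₂) ∉ V)
    (hdist : (u₁, u₁.take (bordPre a₁ u₁)) ≠ (u₂, u₂.take (bordPre a₂ u₂))) :
    u₁.drop (bordPre a₁ u₁) ≠ u₂.drop (bordPre a₂ u₂) := by
  intro hw
  wlog hle : bordPre a₁ u₁ ≤ bordPre a₂ u₂ generalizing u₁ u₂ a₁ a₂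
  · exact this u₂ u₁ a₂ a₁ hu₂ hu₁ hb₂ hb₁ htype₂ htype₁ hdist.symm hw.symm (le_of_not_ge hle)
  obtain ⟨-, hpre₁⟩ := bordPre_lt_length_and_cons_take_suffix hb₁
  obtain ⟨hlt₂, hpre₂⟩ := bordPre_lt_length_and_cons_take_suffix hb₂
  set w := u₂.drop (bordPre a₂ u₂)
  have e₁ : u₁ = u₁.take (bordPre a₁ u₁) ++ w := by rw [← hw, take_append_drop]
  have e₂ : u₂ = u₂.take (bordPre a₂ u₂) ++ w := (take_append_drop _ _).symm
  have hwne : w ≠ [] := by simpa [w] using hlt₂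
  have hB₁ : a₁ :: u₁.take (bordPre a₁ u₁) <:+ u₁.take (bordPre a₁ u₁) ++ w := by rwa [← e₁]
  have hB₂ : u₂.take (bordPre a₂ u₂) <:+ u₂.take (bordPre a₂ u₂) ++ w := by
    rw [← e₂]
    exact (suffix_cons _ _).trans hpre₂
  have hlen : (u₁.take (bordPre a₁ u₁)).length ≤ (u₂.take (bordPre a₂ u₂)).length := by
    simp only [length_take]
    omega
  rcases eq_or_cons_append_suffix_of_length_le hwne hB₁ hB₂ hlen with hB | hsfx
  · exact hdist (Prod.ext (by rw [e₁, hB, ← e₂]) hB)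
  · rw [← e₁, ← e₂] at hsfx
    exact htype₁ (hsuf u₂ hu₂ _ hsfx)
end

section
/- For any string W over alphabet Σ and any character a, the longest proper border of aW satisfies: bord(aW) = (a|W) + 1 if a|W > 0; otherwise bord(aW) equals 1 if the last character of W equals a (and |W| ≥ 1), and 0 otherwise. Here a|W denotes the length of the longest proper border of W that is preceded by character a when it occurs as a suffix of W. -/
/-! A border of `a :: W` of length `b + 1` is `a :: W.take b` occurring as a suffix of `W`, that is,
a border of `W` of length `b` (possibly empty) whose occurrence as a suffix is preceded by `a`.
Hence `bord (a :: W)` is one more than the longest such `b`, and the empty border qualifies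
exactly when `W` ends in `a`. -/

open List

variable {α : Type*} [DecidableEq α]

omit [DecidableEq α] in
theorem List.cons_suffix_iff_of_length_lt {a : α} {s t : List α} (h : s.length < t.length) :
    a :: s <:+ t ↔ s <:+ t ∧ t[t.length - s.length - 1]? = some a := by
  have hlt : t.length - s.length - 1 < t.length := by omega
  have hsucc : t.length - s.length - 1 + 1 = t.length - s.length := by omega
  rw [suffix_iff_eq_drop, suffix_iff_eq_drop, length_cons, Nat.sub_add_eq,
    drop_eq_getElem_cons hlt, hsucc, getElem?_eq_getElem hlt, cons.injEq, Option.some_inj, eq_comm,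
    and_comm]

/-- Unlike `bordPre`, this counts the empty border too. -/
def precededBorders (a : α) (W : List α) : Finset ℕ :=
  (Finset.range W.length).filter (fun b => a :: W.take b <:+ W)

theorem borders_cons (a : α) (W : List α) :
    borders (a :: W) = (precededBorders a W).image (· + 1) := by
  ext c
  simp only [borders, precededBorders, Finset.mem_filter, Finset.mem_Ioo, Finset.mem_image,
    Finset.mem_range, length_cons]
  constructor
  · rintro ⟨⟨hc, hcW⟩, hsuf⟩
    obtain ⟨b, rfl⟩ : ∃ b, c = b + 1 := ⟨c - 1, by omega⟩
    rw [take_succ_cons, suffix_cons_iff] at hsuf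
    refine ⟨b, ⟨by omega, hsuf.resolve_left fun h => ?_⟩, rfl⟩
    have := congrArg length h
    simp only [length_cons, length_take] at this
    omega
  · rintro ⟨b, ⟨hb, hsuf⟩, rfl⟩
    rw [take_succ_cons]
    exact ⟨⟨b.succ_pos, by omega⟩, suffix_cons_iff.mpr (Or.inr hsuf)⟩

theorem bord_cons_eq_sup_precededBorders (a : α) (W : List α) :
    bord (a :: W) = (precededBorders a W).sup (· + 1) := by
  rw [bord, borders_cons, Finset.sup_image]
  rfl

theorem bordPre_eq_sup_precededBorders (a : α) (W : List α) :
    bordPre a W = (precededBorders a W).sup id := by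
  rw [← Finset.sup_erase_bot, bordPre]
  congr 1
  ext b
  simp only [borders, precededBorders, Finset.mem_filter, Finset.mem_Ioo, Finset.mem_erase,
    Finset.mem_range, Nat.bot_eq_zero]
  by_cases hb : b < W.length
  · rw [List.cons_suffix_iff_of_length_lt (by simpa using hb), length_take_of_le hb.le]
    simp only [hb, Nat.pos_iff_ne_zero, and_true, true_and]
    tauto
  · simp [hb]

theorem zero_mem_precededBorders_iff (a : α) (W : List α) :
    0 ∈ precededBorders a W ↔ W.getLast? = some a := by
  simp only [precededBorders, Finset.mem_filter, Finset.mem_range, take_zero,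
    singleton_suffix_iff_getLast?_eq_some]
  exact and_iff_right_of_imp fun h => length_pos_iff.mpr (by rintro rfl; simp at h)

/-- the longest border of aW equals a|W + 1 if a|W > 0; otherwise
it is 1 if the last character of W is a, and 0 otherwise. -/
theorem bord_cons (W : List α) (a : α) :
    (0 < bordPre a W → bord (a :: W) = bordPre a W + 1) ∧
    (bordPre a W = 0 →
      bord (a :: W) = if W.getLast? = some a then 1 else 0) := by
  rw [bordPre_eq_sup_precededBorders, bord_cons_eq_sup_precededBorders]
  constructor
  · intro hpos
    have hne : (precededBorders a W).Nonempty := by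
      rw [Finset.nonempty_iff_ne_empty]
      rintro h
      simp [h] at hpos
    exact (Finset.apply_sup_eq_sup_comp_of_nonempty (g := (· + 1))
      (fun _ _ h => Nat.succ_le_succ h) hne).symm
  · intro hzero
    have hsub : precededBorders a W ⊆ {0} := fun b hb =>
      Finset.mem_singleton.mpr (Nat.eq_zero_of_le_zero (hzero ▸ Finset.le_sup (f := id) hb))
    rcases Finset.subset_singleton_iff.mp hsub with hP | hP
    · have hlast : W.getLast? ≠ some a := by
        rw [Ne, ← zero_mem_precededBorders_iff, hP]
        exact Finset.notMem_empty 0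
      simp [hP, hlast]
    · have hlast : W.getLast? = some a := by
        rw [← zero_mem_precededBorders_iff, hP]
        exact Finset.mem_singleton_self 0
      simp [hP, hlast]
end

section
/- Let W be a string, a a character, and suppose aW has a nonempty longest border V (bord(aW) > 0). Then for every character c, if c|aW > 0 and c|aW < bord(aW), then c|aW = c|V. That is, the function mapping characters to their longest-border-preceded-by lengths for aW agrees with that of V except possibly at the single character d preceding the suffix occurrence of V in aW, where d|aW = bord(aW). -/
open List

variable {α : Type*} [DecidableEq α]

/-! If `V = X.take n` is a suffix of `X`, the proper borders of `V` are exactly the proper borders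
of `X` shorter than `n`, and such a border is preceded by the same character in `V` as in `X`,
since both are read at the same distance from the end. So `c|V` is the maximum over the lengths
counted by `c|X` that lie below `n`, and when `c|X < n` that restriction removes nothing. -/

theorem List.IsSuffix.getElem?_length_sub_sub_one {β : Type*} {V X : List β} (h : V <:+ X) {b : ℕ}
    (hb : b < V.length) : V[V.length - b - 1]? = X[X.length - b - 1]? := by
  obtain ⟨U, rfl⟩ := h
  rw [length_append, getElem?_append_right (by omega)]
  congr 1
  omega

lemma mem_borders_iff {W : List α} {b : ℕ} :
    b ∈ borders W ↔ 0 < b ∧ b < W.length ∧ W.take b <:+ W := by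
  simp [borders, and_assoc]

lemma take_bord_suffix (X : List α) : X.take (bord X) <:+ X := by
  rcases (borders X).eq_empty_or_nonempty with hX | hX
  · simp [bord, hX]
  · obtain ⟨b, hb, hsup⟩ := Finset.sup_mem_of_nonempty (f := id) hX
    rw [bord, ← hsup]
    exact (mem_borders_iff.mp hb).2.2

lemma mem_borders_take_iff {X : List α} {n b : ℕ} (hn : X.take n <:+ X) :
    b ∈ borders (X.take n) ↔ b ∈ borders X ∧ b < n := by
  simp only [mem_borders_iff, length_take, take_take]
  constructor
  · rintro ⟨hb0, hbn, hsuf⟩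
    rw [min_eq_left (by omega)] at hsuf
    exact ⟨⟨hb0, by omega, hsuf.trans hn⟩, by omega⟩
  · rintro ⟨⟨hb0, hbX, hsuf⟩, hbn⟩
    rw [min_eq_left hbn.le]
    exact ⟨hb0, by omega, suffix_of_suffix_length_le hsuf hn (by simp only [length_take]; omega)⟩

lemma bordPre_take_of_bordPre_lt {X : List α} {n : ℕ} (c : α) (hn : X.take n <:+ X)
    (hlt : bordPre c X < n) : bordPre c (X.take n) = bordPre c X := by
  have hchar : ∀ b ∈ borders X, b < n →
      (X.take n)[(X.take n).length - b - 1]? = X[X.length - b - 1]? := fun b hb hbn =>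
    hn.getElem?_length_sub_sub_one <| by
      rw [length_take]; exact lt_min hbn (mem_borders_iff.mp hb).2.1
  have hfilter :
      (borders (X.take n)).filter (fun b => (X.take n)[(X.take n).length - b - 1]? = some c) =
        ((borders X).filter (fun b => X[X.length - b - 1]? = some c)).filter (· < n) := by
    ext b
    simp only [Finset.mem_filter, mem_borders_take_iff hn]
    constructor
    · rintro ⟨⟨hb, hbn⟩, hc⟩
      exact ⟨⟨hb, hchar b hb hbn ▸ hc⟩, hbn⟩
    · rintro ⟨⟨hb, hc⟩, hbn⟩
      exact ⟨⟨hb, hbn⟩, (hchar b hb hbn).symm ▸ hc⟩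
  rw [bordPre, hfilter, Finset.filter_true_of_mem]
  · rfl
  · exact fun b hb => (Finset.le_sup (f := id) hb).trans_lt hlt

theorem bordPre_recursion_general (W : List α) (a : α) :
    ∀ c : α, 0 < bordPre c (a :: W) → bordPre c (a :: W) < bord (a :: W) →
      bordPre c (a :: W) = bordPre c ((a :: W).take (bord (a :: W))) :=
  fun c _ hlt => (bordPre_take_of_bordPre_lt c (take_bord_suffix _) hlt).symm

/-- for the longest border V of aW, the function c ↦ c|aW agrees
with c ↦ c|V for every character c whose value c|aW is positive and strictly
smaller than bord(aW). -/
theorem bordPre_recursion (W : List α) (a : α) (h : 0 < bord (a :: W)) :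
    ∀ c : α, 0 < bordPre c (a :: W) → bordPre c (a :: W) < bord (a :: W) →
      bordPre c (a :: W) = bordPre c ((a :: W).take (bord (a :: W))) :=
  bordPre_recursion_general W a
end

section
/- Let γ(W) = Σ_{b ∈ B(W)} π(W[b+1..|W|]) where B(W) is the set of proper border lengths of W and π assigns each string the product of given per-character probabilities. Then γ satisfies the recursion γ(W) = δ(W)·(1 + γ(B)), where B is the longest proper border of W and δ(W) = π(W[|B|+1..|W|]) (with γ(W) = 0 if W has no border). -/
open List

variable {α : Type*} [DecidableEq α]

/-- Product of per-character probabilities over a string. -/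
def piP (P : α → ℝ) (X : List α) : ℝ := (X.map P).prod

/-- γ(W) = Σ_{b ∈ B(W)} π(W[b+1..|W|]). -/
def gam (P : α → ℝ) (W : List α) [DecidableEq α] : ℝ :=
  ∑ b ∈ borders W, piP P (W.drop b)

/-!
The borders of `W` strictly shorter than its longest border `B` are exactly the borders of `B`
(a border of a border is a border, and of two suffixes of `W` the shorter is a suffix of the
longer), so `B(W) = {|B|} ⊔ B(B)`. For `b < |B|` the tail `W[b+1..]` is `B[b+1..]` followed by
`W[|B|+1..]`, and `π` is multiplicative, which factors `δ(W)` out of every term but the first.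
-/

omit [DecidableEq α] in
theorem piP_append (P : α → ℝ) (x y : List α) : piP P (x ++ y) = piP P x * piP P y := by
  simp [piP]

omit [DecidableEq α] in
theorem List.drop_eq_drop_take_append_drop (W : List α) {b m : ℕ} (h : b ≤ m) :
    W.drop b = (W.take m).drop b ++ W.drop m := by
  obtain ⟨n, rfl⟩ := Nat.exists_eq_add_of_le h
  rw [List.drop_take, Nat.add_sub_cancel_left, List.drop_take_append_drop]

theorem lt_length_of_mem_borders {W : List α} {b : ℕ} (hb : b ∈ borders W) : b < W.length := by
  simp only [borders, Finset.mem_filter, Finset.mem_Ioo] at hb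
  exact hb.1.2

theorem mem_borders_take {W : List α} {m b : ℕ} (hm : m ∈ borders W) :
    b ∈ borders (W.take m) ↔ b ∈ borders W ∧ b < m := by
  simp only [borders, Finset.mem_filter, Finset.mem_Ioo] at hm ⊢
  obtain ⟨⟨hm0, hmW⟩, hmsuf⟩ := hm
  have hlen : (W.take m).length = m := by simp; omega
  have htake : ∀ c ≤ m, (W.take m).take c = W.take c := fun c hc => by
    rw [List.take_take, Nat.min_eq_left hc]
  rw [hlen]
  constructor
  · rintro ⟨⟨hb0, hbm⟩, hbsuf⟩
    rw [htake b hbm.le] at hbsuf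
    exact ⟨⟨⟨hb0, by omega⟩, hbsuf.trans hmsuf⟩, hbm⟩
  · rintro ⟨⟨⟨hb0, -⟩, hbsuf⟩, hbm⟩
    refine ⟨⟨hb0, hbm⟩, ?_⟩
    rw [htake b hbm.le]
    -- both are suffixes of `W`, and the shorter one is a suffix of the longer
    exact List.suffix_of_suffix_length_le hbsuf hmsuf (by simp; omega)

theorem le_bord {W : List α} {b : ℕ} (hb : b ∈ borders W) : b ≤ bord W :=
  Finset.le_sup (f := id) hb

theorem bord_mem_borders {W : List α} (h : (borders W).Nonempty) : bord W ∈ borders W := by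
  obtain ⟨m, hm, hbord⟩ := Finset.exists_mem_eq_sup (borders W) h id
  rw [bord, hbord]
  exact hm

theorem bord_notMem_borders_take (W : List α) : bord W ∉ borders (W.take (bord W)) :=
  fun h => by simpa using lt_length_of_mem_borders h

theorem borders_eq_insert_bord {W : List α} (h : (borders W).Nonempty) :
    borders W = insert (bord W) (borders (W.take (bord W))) := by
  ext b
  rw [Finset.mem_insert, mem_borders_take (bord_mem_borders h)]
  constructor
  · intro hb
    rcases (le_bord hb).lt_or_eq with hlt | heq
    · exact Or.inr ⟨hb, hlt⟩
    · exact Or.inl heq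
  · rintro (rfl | ⟨hb, -⟩)
    · exact bord_mem_borders h
    · exact hb

/-- γ satisfies γ(W) = δ(W)·(1 + γ(B)) where B is the longest
proper border of W and δ(W) = π(W[|B|+1..|W|]); and γ(W) = 0 if W has no
border. -/
theorem gamma_recursion (P : α → ℝ) (W : List α) :
    ((borders W).Nonempty →
      gam P W = piP P (W.drop (bord W)) * (1 + gam P (W.take (bord W)))) ∧
    (borders W = ∅ → gam P W = 0) := by
  refine ⟨fun hne => ?_, fun hempty => by simp [gam, hempty]⟩
  rw [gam, borders_eq_insert_bord hne, Finset.sum_insert (bord_notMem_borders_take W), gam,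
    mul_add, mul_one, Finset.mul_sum]
  congr 1
  refine Finset.sum_congr rfl fun b hb => ?_
  have hb_lt : b < bord W := ((mem_borders_take (bord_mem_borders hne)).1 hb).2
  rw [W.drop_eq_drop_take_append_drop hb_lt.le, piP_append, mul_comm]
end
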